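/- arXiv:1201.1640 — 4 statements merged into one kernel-verified Lean document; each statement's English description precedes it below -/
import Mathlib

section
/- Let z : [-1,1] → ℝ be twice continuously differentiable and satisfy L[z](x) ≥ 0 for all x ∈ [-1,1]. Then z(x) ≥ 0 for all x ∈ [-1,1]. (Weak maximum principle for the linearized generalized-apparent-horizon operator, used in the Kruskal counterexample to the Bray–Khuri Penrose inequality to prove positivity of the first-order horizon profiles.) -/
/-!
Let `x₀` be a minimum point of `z` on `[-1,1]`. The first-order condition at `x₀`, tested in the
direction of `0`, gives `x₀ z'(x₀) ≤ 0`; the second-order condition gives `(1 - x₀²) z''(x₀) ≥ 0`,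
trivially at the endpoints where the weight vanishes. Hence `z(x₀) ≥ L[z](x₀) ≥ 0`.
-/

open Set

/-- The linearized generalized-apparent-horizon operator
`L[z](x) = -(1 - x²) z''(x) + 2x z'(x) + z(x)`, written in terms of
given derivative functions `z'`, `z''`. -/
noncomputable def Lop (z z' z'' : ℝ → ℝ) (x : ℝ) : ℝ :=
  -(1 - x ^ 2) * z'' x + 2 * x * z' x + z x

/-- `z` is twice continuously differentiable on `[-1,1]`, with first derivative `z'`
and second derivative `z''`. -/
def IsC2On (z z' z'' : ℝ → ℝ) : Prop :=
  (∀ x ∈ Icc (-1 : ℝ) 1, HasDerivWithinAt z (z' x) (Icc (-1 : ℝ) 1) x) ∧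
  (∀ x ∈ Icc (-1 : ℝ) 1, HasDerivWithinAt z' (z'' x) (Icc (-1 : ℝ) 1) x) ∧
  ContinuousOn z'' (Icc (-1 : ℝ) 1)

open Filter Topology

theorem IsLocalMinOn.hasDerivWithinAt_mul_sub_nonneg {f : ℝ → ℝ} {s : Set ℝ} {a f' y : ℝ}
    (h : IsLocalMinOn f s a) (hs : Convex ℝ s) (ha : a ∈ s) (hy : y ∈ s)
    (hf : HasDerivWithinAt f f' s a) : 0 ≤ f' * (y - a) := by
  simpa [mul_comm] using h.hasFDerivWithinAt_nonneg hf.hasFDerivWithinAt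
    (sub_mem_posTangentConeAt_of_segment_subset (hs.segment_subset ha hy))

theorem IsLocalMin.nonneg_of_hasDerivAt_of_hasDerivAt {f f' : ℝ → ℝ} {a c : ℝ}
    (h : IsLocalMin f a) (hf : ∀ᶠ x in 𝓝 a, HasDerivAt f (f' x) x) (hf' : HasDerivAt f' c a) :
    0 ≤ c := by
  have hderiv : HasDerivAt (deriv f) c a :=
    hf'.congr_of_eventuallyEq (hf.mono fun x hx => hx.deriv)
  -- if `c < 0`, the second-derivative test makes `a` a local maximum as well, so `f` is
  -- locally constant and `c = 0`
  by_contra! hc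
  have hmax : IsLocalMax f a :=
    isLocalMax_of_deriv_deriv_neg (hderiv.deriv ▸ hc) h.deriv_eq_zero
      hf.self_of_nhds.continuousAt
  have hconst : f =ᶠ[𝓝 a] fun _ => f a := by
    filter_upwards [h, hmax] with x hmin hmax using le_antisymm hmax hmin
  have hderiv_zero : deriv f =ᶠ[𝓝 a] fun _ => 0 := by
    filter_upwards [hconst.eventuallyEq_nhds] with x hx
    rw [hx.deriv_eq, deriv_const]
  exact hc.ne ((hderiv.congr_of_eventuallyEq hderiv_zero.symm).unique (hasDerivAt_const a 0))

theorem IsMinOn.sub_mul_sub_mul_nonneg_of_hasDerivWithinAt {f f' : ℝ → ℝ} {a b x₀ c : ℝ}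
    (h : IsMinOn f (Icc a b) x₀) (hx₀ : x₀ ∈ Icc a b)
    (hf : ∀ x ∈ Icc a b, HasDerivWithinAt f (f' x) (Icc a b) x)
    (hf' : HasDerivWithinAt f' c (Icc a b) x₀) : 0 ≤ (x₀ - a) * (b - x₀) * c := by
  rcases hx₀.1.eq_or_lt with rfl | hax
  · simp
  rcases hx₀.2.eq_or_lt with rfl | hxb
  · simp
  have hf_near : ∀ᶠ x in 𝓝 x₀, HasDerivAt f (f' x) x := by
    filter_upwards [Ioo_mem_nhds hax hxb] with x hx
    exact (hf x (Ioo_subset_Icc_self hx)).hasDerivAt (Icc_mem_nhds hx.1 hx.2)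
  have hc := (h.isLocalMin (Icc_mem_nhds hax hxb)).nonneg_of_hasDerivAt_of_hasDerivAt hf_near
    (hf'.hasDerivAt (Icc_mem_nhds hax hxb))
  exact mul_nonneg (mul_nonneg (sub_nonneg.2 hax.le) (sub_nonneg.2 hxb.le)) hc

/-- Weak maximum principle for the operator `L`: if `L[z] ≥ 0` on `[-1,1]`,
then `z ≥ 0` on `[-1,1]`. -/
theorem weak_maximum_principle_Lop (z z' z'' : ℝ → ℝ)
    (hC2 : IsC2On z z' z'')
    (hL : ∀ x ∈ Icc (-1 : ℝ) 1, 0 ≤ Lop z z' z'' x) :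
    ∀ x ∈ Icc (-1 : ℝ) 1, 0 ≤ z x := by
  obtain ⟨hz, hz', -⟩ := hC2
  obtain ⟨x₀, hx₀, hmin⟩ := isCompact_Icc.exists_isMinOn (nonempty_Icc.2 (by norm_num))
    fun x hx => (hz x hx).continuousWithinAt
  suffices 0 ≤ z x₀ from fun x hx => this.trans (hmin hx)
  have hfirst := hmin.localize.hasDerivWithinAt_mul_sub_nonneg (convex_Icc _ _) hx₀
    (show (0 : ℝ) ∈ Icc (-1) 1 by norm_num) (hz x₀ hx₀)
  have hsecond := hmin.sub_mul_sub_mul_nonneg_of_hasDerivWithinAt hx₀ hz (hz' x₀ hx₀)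
  have hLx₀ := hL x₀ hx₀
  unfold Lop at hLx₀
  nlinarith
end

section
/- Let z : [-1,1] → ℝ be twice continuously differentiable and satisfy L[z](x) ≥ 0 for all x ∈ [-1,1]. If z(x₀) = 0 for some x₀ in the open interval (-1,1), then z vanishes identically on [-1,1]. (Strong maximum principle for the linearized generalized-apparent-horizon operator; note the zeroth-order coefficient of L is +1, so this is the version of the maximum principle valid because the interior minimum value is zero.) -/
/-!
At a minimum point `w` of `z` on `[-1, 1]` one has `L[z](w) ≤ z(w)`: inside, `z'(w) = 0` and
`z''(w) ≥ 0`; at `w = ±1` the second-order coefficient vanishes and `z'(w)` has the sign of a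
one-sided minimum. Hence `L[z] ≥ 0` forces `z ≥ 0`, so `x₀` is an interior minimum and
`z'(x₀) = 0`. If `z(b) > 0` for some `b ∈ (x₀, 1)`, Hopf's barrier `φ = exp (α (x - x₀)) - 1`,
with `α` so large that `L[φ] < 0` on `[x₀, b]`, makes `v = z - ε φ` satisfy `L[v] > 0`,
`v(x₀) = 0`, `v'(x₀) < 0` and `v(b) > 0`; so `v` has an interior minimum `w`, where
`0 < L[v](w) ≤ v(w) ≤ 0`. Points left of `x₀` follow from the reflection `x ↦ -x`, which
commutes with `L`, and the endpoints `±1` by continuity.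
-/

open Set

open Filter Topology

theorem IsLocalMin.nonneg_of_hasDerivAt_hasDerivAt {f f' : ℝ → ℝ} {x f'' : ℝ}
    (h : IsLocalMin f x) (hf : ∀ᶠ y in 𝓝 x, HasDerivAt f (f' y) y)
    (hf' : HasDerivAt f' f'' x) : 0 ≤ f'' := by
  by_contra! hneg
  have hderiv : deriv f =ᶠ[𝓝 x] f' := hf.mono fun y hy => hy.deriv
  have hderiv2 : deriv (deriv f) x = f'' := hderiv.deriv_eq.trans hf'.deriv
  -- By the second derivative test `x` is also a local maximum, so `f` is locally constant.
  have hmax : IsLocalMax f x :=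
    isLocalMax_of_deriv_deriv_neg (hderiv2 ▸ hneg) h.deriv_eq_zero hf.self_of_nhds.continuousAt
  have hconst : f =ᶠ[𝓝 x] fun _ => f x := (h.and hmax).mono fun y hy => le_antisymm hy.2 hy.1
  have hderiv_zero : deriv f =ᶠ[𝓝 x] fun _ => 0 :=
    hconst.eventuallyEq_nhds.mono fun y hy => by rw [hy.deriv_eq, deriv_const]
  rw [hderiv_zero.deriv_eq, deriv_const] at hderiv2
  exact hneg.ne hderiv2.symm

theorem IsMinOn.mul_sub_nonneg_of_hasDerivWithinAt {f : ℝ → ℝ} {s : Set ℝ} {a y f' : ℝ}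
    (hmin : IsMinOn f s a) (hs : Convex ℝ s) (ha : a ∈ s) (hy : y ∈ s)
    (hf : HasDerivWithinAt f f' s a) : 0 ≤ (y - a) * f' := by
  simpa [mul_comm] using hmin.localize.hasFDerivWithinAt_nonneg hf.hasFDerivWithinAt
    (sub_mem_posTangentConeAt_of_segment_subset (hs.segment_subset ha hy))

theorem HasDerivWithinAt.hasDerivAt_of_mem_Ioo {f : ℝ → ℝ} {f' a b x : ℝ}
    (hf : HasDerivWithinAt f f' (Icc a b) x) (hx : x ∈ Ioo a b) : HasDerivAt f f' x :=
  hf.hasDerivAt (Icc_mem_nhds hx.1 hx.2)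

theorem exists_isLocalMin_mem_Ioo {v v' : ℝ → ℝ} {a b : ℝ} (hab : a < b)
    (hv : ∀ x ∈ Icc a b, HasDerivAt v (v' x) x) (hv'a : v' a < 0) (hvb : v a < v b) :
    ∃ w ∈ Ioo a b, IsLocalMin v w ∧ v w ≤ v a := by
  obtain ⟨w, hw, hmin⟩ := isCompact_Icc.exists_isMinOn (nonempty_Icc.2 hab.le)
    fun x hx => (hv x hx).continuousAt.continuousWithinAt
  have hwa : w ≠ a := by
    rintro rfl
    have := hmin.mul_sub_nonneg_of_hasDerivWithinAt (convex_Icc w b) hw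
      (right_mem_Icc.2 hab.le) (hv w hw).hasDerivWithinAt
    nlinarith
  have hva : v w ≤ v a := hmin (left_mem_Icc.2 hab.le)
  have hwb : w ≠ b := by rintro rfl; linarith
  have hw' : w ∈ Ioo a b := ⟨hw.1.lt_of_ne hwa.symm, hw.2.lt_of_ne hwb⟩
  exact ⟨w, hw', hmin.isLocalMin (Icc_mem_nhds hw'.1 hw'.2), hva⟩

theorem Lop_sub_const_mul (z z' z'' φ φ' φ'' : ℝ → ℝ) (c x : ℝ) :
    Lop (fun y => z y - c * φ y) (fun y => z' y - c * φ' y) (fun y => z'' y - c * φ'' y) x =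
      Lop z z' z'' x - c * Lop φ φ' φ'' x := by
  simp only [Lop]; ring

theorem Lop_comp_neg (z z' z'' : ℝ → ℝ) (x : ℝ) :
    Lop (fun y => z (-y)) (fun y => -z' (-y)) (fun y => z'' (-y)) x = Lop z z' z'' (-x) := by
  simp only [Lop]; ring

theorem Lop_le_of_isLocalMin {z z' z'' : ℝ → ℝ} {w : ℝ} (hw : w ^ 2 ≤ 1)
    (hmin : IsLocalMin z w) (hz : ∀ᶠ y in 𝓝 w, HasDerivAt z (z' y) y)
    (hz' : HasDerivAt z' (z'' w) w) : Lop z z' z'' w ≤ z w := by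
  have h1 : z' w = 0 := hmin.hasDerivAt_eq_zero hz.self_of_nhds
  have h2 : 0 ≤ z'' w := hmin.nonneg_of_hasDerivAt_hasDerivAt hz hz'
  rw [Lop, h1]
  nlinarith

theorem Lop_le_of_isMinOn {z z' z'' : ℝ → ℝ} {w : ℝ}
    (hz : ∀ x ∈ Icc (-1 : ℝ) 1, HasDerivWithinAt z (z' x) (Icc (-1 : ℝ) 1) x)
    (hz' : ∀ x ∈ Icc (-1 : ℝ) 1, HasDerivWithinAt z' (z'' x) (Icc (-1 : ℝ) 1) x)
    (hw : w ∈ Icc (-1 : ℝ) 1) (hmin : IsMinOn z (Icc (-1 : ℝ) 1) w) :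
    Lop z z' z'' w ≤ z w := by
  have hslope (y : ℝ) (hy : y ∈ Icc (-1 : ℝ) 1) : 0 ≤ (y - w) * z' w :=
    hmin.mul_sub_nonneg_of_hasDerivWithinAt (convex_Icc _ _) hw hy (hz w hw)
  rcases hw.1.eq_or_lt with rfl | hlt
  · have := hslope 1 (by norm_num)
    rw [Lop]; nlinarith
  rcases hw.2.eq_or_lt with rfl | hgt
  · have := hslope (-1) (by norm_num)
    rw [Lop]; nlinarith
  exact Lop_le_of_isLocalMin (by nlinarith) (hmin.isLocalMin (Icc_mem_nhds hlt hgt))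
    (eventually_of_mem (Ioo_mem_nhds hlt hgt) fun y hy =>
      (hz y (Ioo_subset_Icc_self hy)).hasDerivAt_of_mem_Ioo hy)
    ((hz' w hw).hasDerivAt_of_mem_Ioo ⟨hlt, hgt⟩)

theorem nonneg_of_Lop_nonneg {z z' z'' : ℝ → ℝ}
    (hz : ∀ x ∈ Icc (-1 : ℝ) 1, HasDerivWithinAt z (z' x) (Icc (-1 : ℝ) 1) x)
    (hz' : ∀ x ∈ Icc (-1 : ℝ) 1, HasDerivWithinAt z' (z'' x) (Icc (-1 : ℝ) 1) x)
    (hL : ∀ x ∈ Icc (-1 : ℝ) 1, 0 ≤ Lop z z' z'' x) : ∀ x ∈ Icc (-1 : ℝ) 1, 0 ≤ z x := by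
  obtain ⟨w, hw, hmin⟩ := isCompact_Icc.exists_isMinOn (nonempty_Icc.2 (by norm_num))
    fun x hx => (hz x hx).continuousWithinAt
  intro x hx
  calc 0 ≤ Lop z z' z'' w := hL w hw
    _ ≤ z w := Lop_le_of_isMinOn hz hz' hw hmin
    _ ≤ z x := hmin hx

theorem min_one_sub_sq_le_of_mem_Icc {a b x : ℝ} (hx : x ∈ Icc a b) :
    min (1 - a ^ 2) (1 - b ^ 2) ≤ 1 - x ^ 2 := by
  rcases le_total x 0 with h | h
  · exact (min_le_left _ _).trans (by nlinarith [hx.1])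
  · exact (min_le_right _ _).trans (by nlinarith [hx.2])

theorem Lop_exp_sub_one_neg {a c α x : ℝ} (hx : x ≤ 1) (hc : c ≤ 1 - x ^ 2) (hα : 1 ≤ α)
    (hcα : 3 ≤ c * α) :
    Lop (fun y => Real.exp (α * (y - a)) - 1) (fun y => α * Real.exp (α * (y - a)))
      (fun y => α * (α * Real.exp (α * (y - a)))) x < 0 := by
  have hbracket : -(1 - x ^ 2) * α ^ 2 + 2 * x * α + 1 ≤ 0 := by
    nlinarith [mul_le_mul_of_nonneg_right hc (sq_nonneg α),
      mul_le_mul_of_nonneg_right hcα (zero_le_one.trans hα),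
      mul_le_mul_of_nonneg_right hx (zero_le_one.trans hα)]
  have hE := Real.exp_pos (α * (x - a))
  have hLop : Lop (fun y => Real.exp (α * (y - a)) - 1) (fun y => α * Real.exp (α * (y - a)))
      (fun y => α * (α * Real.exp (α * (y - a)))) x =
      Real.exp (α * (x - a)) * (-(1 - x ^ 2) * α ^ 2 + 2 * x * α + 1) - 1 := by
    simp only [Lop]; ring
  rw [hLop]
  nlinarith [mul_nonpos_of_nonneg_of_nonpos hE.le hbracket]

theorem exists_Lop_barrier {a b : ℝ} (ha : -1 < a) (hab : a < b) (hb : b < 1) :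
    ∃ φ φ' φ'' : ℝ → ℝ, (∀ x, HasDerivAt φ (φ' x) x) ∧ (∀ x, HasDerivAt φ' (φ'' x) x) ∧
      φ a = 0 ∧ 0 < φ' a ∧ 0 < φ b ∧ ∀ x ∈ Icc a b, Lop φ φ' φ'' x < 0 := by
  set c := min (1 - a ^ 2) (1 - b ^ 2)
  have hc : 0 < c := lt_min (by nlinarith) (by nlinarith)
  set α := 3 / c + 1
  have hα : 1 ≤ α := le_add_of_nonneg_left (by positivity)
  have hcα : 3 ≤ c * α := by
    rw [mul_add, mul_div_cancel₀ _ hc.ne']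
    linarith
  have hexp (x : ℝ) :
      HasDerivAt (fun y => Real.exp (α * (y - a))) (α * Real.exp (α * (x - a))) x := by
    simpa [mul_comm] using (((hasDerivAt_id x).sub_const a).const_mul α).exp
  refine ⟨fun y => Real.exp (α * (y - a)) - 1, fun y => α * Real.exp (α * (y - a)),
    fun y => α * (α * Real.exp (α * (y - a))), fun x => (hexp x).sub_const 1,
    fun x => (hexp x).const_mul α, by simp,
    by simp only [sub_self, mul_zero, Real.exp_zero, mul_one]; linarith, ?_, fun x hx =>
    Lop_exp_sub_one_neg (hx.2.trans hb.le) (min_one_sub_sq_le_of_mem_Icc hx) hα hcα⟩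
  simp only [sub_pos, Real.one_lt_exp_iff]
  exact mul_pos (by linarith) (by linarith)

theorem Lop_hopf {z z' z'' : ℝ → ℝ} {a b : ℝ} (ha : -1 < a) (hab : a < b) (hb : b < 1)
    (hz : ∀ x ∈ Icc a b, HasDerivAt z (z' x) x) (hz' : ∀ x ∈ Icc a b, HasDerivAt z' (z'' x) x)
    (hL : ∀ x ∈ Icc a b, 0 ≤ Lop z z' z'' x) (hza : z a = 0) (hz'a : z' a ≤ 0) : z b ≤ 0 := by
  by_contra! hzb
  obtain ⟨φ, φ', φ'', hφ, hφ', hφa, hφ'a, hφb, hLφ⟩ := exists_Lop_barrier ha hab hb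
  set ε := z b / (2 * φ b)
  have hε : 0 < ε := by positivity
  have hεb : ε * φ b = z b / 2 := by simp only [ε]; field_simp
  have hv (x : ℝ) (hx : x ∈ Icc a b) : HasDerivAt (fun y => z y - ε * φ y) (z' x - ε * φ' x) x :=
    (hz x hx).sub ((hφ x).const_mul ε)
  obtain ⟨w, hw, hmin, hwa⟩ := exists_isLocalMin_mem_Ioo hab hv (by nlinarith)
    (by simp only [hza, hφa, hεb]; linarith)
  have hw' : w ∈ Icc a b := Ioo_subset_Icc_self hw
  have hLw := Lop_le_of_isLocalMin (z'' := fun y => z'' y - ε * φ'' y)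
    (by nlinarith [ha.trans hw.1, hw.2.trans hb]) hmin
    (eventually_of_mem (Icc_mem_nhds hw.1 hw.2) hv) ((hz' w hw').sub ((hφ' w).const_mul ε))
  rw [Lop_sub_const_mul] at hLw
  simp only [hza, hφa] at hwa
  nlinarith [hL w hw', hLφ w hw']

theorem Lop_hopf_left {z z' z'' : ℝ → ℝ} {a b : ℝ} (ha : -1 < a) (hab : a < b) (hb : b < 1)
    (hz : ∀ x ∈ Icc a b, HasDerivAt z (z' x) x) (hz' : ∀ x ∈ Icc a b, HasDerivAt z' (z'' x) x)
    (hL : ∀ x ∈ Icc a b, 0 ≤ Lop z z' z'' x) (hzb : z b = 0) (hz'b : 0 ≤ z' b) : z a ≤ 0 := by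
  have hneg (x : ℝ) (hx : x ∈ Icc (-b) (-a)) : -x ∈ Icc a b :=
    ⟨by linarith [hx.2], by linarith [hx.1]⟩
  simpa using Lop_hopf (z := fun x => z (-x)) (z' := fun x => -z' (-x))
    (z'' := fun x => z'' (-x)) (by linarith) (neg_lt_neg hab) (by linarith)
    (fun x hx => by simpa [Function.comp_def] using (hz (-x) (hneg x hx)).comp x (hasDerivAt_neg x))
    (fun x hx => by
      simpa [Function.comp_def] using ((hz' (-x) (hneg x hx)).comp x (hasDerivAt_neg x)).fun_neg)
    (fun x hx => (Lop_comp_neg z z' z'' x).symm ▸ hL (-x) (hneg x hx)) (by simpa) (by simpa)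

theorem nonpos_of_Lop_nonneg_of_eq_zero {z z' z'' : ℝ → ℝ} {x₀ x : ℝ}
    (hz : ∀ y ∈ Ioo (-1 : ℝ) 1, HasDerivAt z (z' y) y)
    (hz' : ∀ y ∈ Ioo (-1 : ℝ) 1, HasDerivAt z' (z'' y) y)
    (hL : ∀ y ∈ Ioo (-1 : ℝ) 1, 0 ≤ Lop z z' z'' y) (hx₀ : x₀ ∈ Ioo (-1 : ℝ) 1)
    (hz₀ : z x₀ = 0) (hz'₀ : z' x₀ = 0) (hx : x ∈ Ioo (-1 : ℝ) 1) : z x ≤ 0 := by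
  rcases lt_trichotomy x x₀ with hlt | rfl | hgt
  · have hsub := Icc_subset_Ioo hx.1 hx₀.2
    exact Lop_hopf_left hx.1 hlt hx₀.2 (fun y hy => hz y (hsub hy)) (fun y hy => hz' y (hsub hy))
      (fun y hy => hL y (hsub hy)) hz₀ hz'₀.ge
  · exact hz₀.le
  · have hsub := Icc_subset_Ioo hx₀.1 hx.2
    exact Lop_hopf hx₀.1 hgt hx.2 (fun y hy => hz y (hsub hy)) (fun y hy => hz' y (hsub hy))
      (fun y hy => hL y (hsub hy)) hz₀ hz'₀.le

/-- Strong maximum principle for the operator `L`: if `L[z] ≥ 0` on `[-1,1]`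
and `z` vanishes at an interior point `x₀ ∈ (-1,1)`, then `z ≡ 0` on `[-1,1]`. -/
theorem strong_maximum_principle_Lop (z z' z'' : ℝ → ℝ)
    (hC2 : IsC2On z z' z'')
    (hL : ∀ x ∈ Icc (-1 : ℝ) 1, 0 ≤ Lop z z' z'' x)
    (x₀ : ℝ) (hx₀ : x₀ ∈ Ioo (-1 : ℝ) 1) (hz₀ : z x₀ = 0) :
    ∀ x ∈ Icc (-1 : ℝ) 1, z x = 0 := by
  obtain ⟨hz, hz', -⟩ := hC2
  have hnonneg := nonneg_of_Lop_nonneg hz hz' hL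
  have hzIoo (x : ℝ) (hx : x ∈ Ioo (-1 : ℝ) 1) : HasDerivAt z (z' x) x :=
    (hz x (Ioo_subset_Icc_self hx)).hasDerivAt_of_mem_Ioo hx
  have hz'Ioo (x : ℝ) (hx : x ∈ Ioo (-1 : ℝ) 1) : HasDerivAt z' (z'' x) x :=
    (hz' x (Ioo_subset_Icc_self hx)).hasDerivAt_of_mem_Ioo hx
  have hmin : IsLocalMin z x₀ :=
    IsMinOn.isLocalMin (fun x hx => hz₀ ▸ hnonneg x hx) (Icc_mem_nhds hx₀.1 hx₀.2)
  have hzero : EqOn z 0 (Ioo (-1) 1) := fun x hx =>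
    le_antisymm (nonpos_of_Lop_nonneg_of_eq_zero hzIoo hz'Ioo
      (fun y hy => hL y (Ioo_subset_Icc_self hy)) hx₀ hz₀
      (hmin.hasDerivAt_eq_zero (hzIoo x₀ hx₀)) hx) (hnonneg x (Ioo_subset_Icc_self hx))
  exact hzero.of_subset_closure (fun x hx => (hz x hx).continuousWithinAt) continuousOn_const
    Ioo_subset_Icc_self (by rw [closure_Ioo (by norm_num)])
end

section
/- There exists a unique twice continuously differentiable function Y : [-1,1] → ℝ satisfying L[Y](x) = 3|x| for all x ∈ [-1,1]. Moreover, this Y is even, i.e. Y(-x) = Y(x), and strictly positive: Y(x) > 0 for every x ∈ [-1,1]. (Y is the first-order profile Y₁ of the generalized apparent horizon Ŝ_ε in the perturbed Kruskal slices Σ_ε; in the paper it is given by the Fourier–Legendre series Y₁ = 3/2 + Σ_{l≥1} a_{2l} P_{2l}, and its positivity follows from the maximum principle applied to L[Y₁] = 3|x|.) -/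
open Set

/-!
Put `x = 1 - 2t`. On `[0, 1]` the function `x` solves `L z = 3x`, and the homogeneous equation
`L z = 0` becomes the hypergeometric equation `t(1 - t) g'' + (1 - 2t) g' - g = 0`, whose solution
regular at `t = 0` is a power series with coefficients in `(0, 1]`. Hence
`F(x) = x + κ g((1 - x)/2)` solves `L F = 3x` on `[0, 1]`, and `κ = 2 / g'(1/2) > 0` gives
`F'(0) = 0`, so the even extension `F(|x|)` is `C²` and solves `L Y = 3|x|` on `[-1, 1]`; it is
positive because `g ≥ 1`.

Uniqueness: if `L W = 0` then `((1 - x²) W W')' = W² + (1 - x²) W'² ≥ 0`, and `(1 - x²) W W'`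
vanishes at `±1`; so it vanishes identically, hence so does its derivative, and `W = 0`.
-/

open Topology

section PowerSeries

variable {a : ℕ → ℝ} {C : ℝ} {m : ℕ}

def derivCoeff (a : ℕ → ℝ) (k : ℕ) : ℝ := (k + 1) * a (k + 1)

def shiftCoeff (a : ℕ → ℝ) : ℕ → ℝ
  | 0 => 0
  | k + 1 => a k

theorem summable_add_one_pow_mul_geometric (m : ℕ) {r : ℝ} (hr₀ : 0 ≤ r) (hr : r < 1) :
    Summable fun k : ℕ => ((k : ℝ) + 1) ^ m * r ^ k := by
  have hr' : ‖r‖ < 1 := by rwa [Real.norm_of_nonneg hr₀]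
  refine Summable.of_nonneg_of_le (fun k => by positivity) (fun k => ?_)
    (((summable_pow_mul_geometric_of_norm_lt_one m hr').add
      (summable_geometric_of_lt_one hr₀ hr)).mul_left (2 ^ (m - 1)))
  calc ((k : ℝ) + 1) ^ m * r ^ k ≤ 2 ^ (m - 1) * ((k : ℝ) ^ m + 1 ^ m) * r ^ k := by
        gcongr; exact add_pow_le k.cast_nonneg zero_le_one m
    _ = 2 ^ (m - 1) * ((k : ℝ) ^ m * r ^ k + r ^ k) := by ring

theorem abs_derivCoeff_le (ha : ∀ k, |a k| ≤ C * (k + 1) ^ m) (k : ℕ) :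
    |derivCoeff a k| ≤ 2 ^ m * C * (k + 1) ^ (m + 1) := by
  have hC : 0 ≤ C := by simpa using (abs_nonneg _).trans (ha 0)
  have hk : (0 : ℝ) ≤ k := k.cast_nonneg
  calc |derivCoeff a k| = (k + 1) * |a (k + 1)| := by
        rw [derivCoeff, abs_mul, abs_of_nonneg (by positivity)]
    _ ≤ (k + 1) * (C * (2 * (k + 1)) ^ m) := by
        gcongr
        refine (ha (k + 1)).trans ?_
        push_cast
        gcongr
        linarith
    _ = 2 ^ m * C * (k + 1) ^ (m + 1) := by rw [mul_pow]; ring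

theorem summable_mul_pow (ha : ∀ k, |a k| ≤ C * (k + 1) ^ m) {t : ℝ} (ht : |t| < 1) :
    Summable fun k => a k * t ^ k :=
  .of_norm_bounded ((summable_add_one_pow_mul_geometric m (abs_nonneg t) ht).mul_left C)
    fun k => by
      rw [norm_mul, norm_pow, Real.norm_eq_abs, Real.norm_eq_abs, ← mul_assoc]
      gcongr
      exact ha k

theorem HasSum.shiftCoeff_mul_pow {s t : ℝ} (h : HasSum (fun k => a k * t ^ k) s) :
    HasSum (fun k => shiftCoeff a k * t ^ k) (t * s) := by
  rw [← hasSum_nat_add_iff' 1]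
  simp only [Finset.range_one, Finset.sum_singleton, shiftCoeff, zero_mul, sub_zero]
  have hterm : (fun k => a k * t ^ (k + 1)) = fun k => t * (a k * t ^ k) := by
    ext k; ring
  rw [hterm]
  exact h.mul_left t

theorem hasDerivAt_tsum_mul_pow (ha : ∀ k, |a k| ≤ C * (k + 1) ^ m) {t : ℝ} (ht : |t| < 1) :
    HasDerivAt (fun s => ∑' k, a k * s ^ k) (∑' k, derivCoeff a k * t ^ k) t := by
  obtain ⟨r, htr, hr⟩ := exists_between ht
  have hr₀ : 0 ≤ r := (abs_nonneg t).trans htr.le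
  have hball : ∀ s ∈ Metric.ball (0 : ℝ) r, |s| < r := fun s hs => by
    simpa using hs
  -- Differentiating the series from its second term on avoids the exponent `k - 1`.
  have htail : HasDerivAt (fun s => ∑' k, a (k + 1) * s ^ (k + 1))
      (∑' k, derivCoeff a k * t ^ k) t := by
    refine hasDerivAt_tsum_of_isPreconnected (y₀ := (0 : ℝ))
      (g := fun k s => a (k + 1) * s ^ (k + 1)) (g' := fun k s => derivCoeff a k * s ^ k)
      ((summable_add_one_pow_mul_geometric (m + 1) hr₀ hr).mul_left (2 ^ m * C))
      Metric.isOpen_ball (convex_ball 0 r).isPreconnected (fun k s _ => ?_) (fun k s hs => ?_)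
      (Metric.mem_ball_self (htr.trans_le' (abs_nonneg t))) ?_ (by simpa using htr)
    · exact ((hasDerivAt_pow (k + 1) s).const_mul (a (k + 1))).congr_deriv
        (by simp [derivCoeff]; ring)
    · rw [norm_mul, norm_pow, Real.norm_eq_abs, Real.norm_eq_abs, ← mul_assoc]
      exact mul_le_mul (abs_derivCoeff_le ha k)
        (pow_le_pow_left₀ (abs_nonneg s) (hball s hs).le k) (by positivity)
        ((abs_nonneg _).trans (abs_derivCoeff_le ha k))
    · simp
  have heq : (fun s => ∑' k, a k * s ^ k)
      =ᶠ[𝓝 t] fun s => a 0 + ∑' k, a (k + 1) * s ^ (k + 1) := by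
    have hball₁ : Metric.ball (0 : ℝ) 1 ∈ 𝓝 t :=
      Metric.isOpen_ball.mem_nhds (by simpa using ht)
    filter_upwards [hball₁] with s hs
    rw [(summable_mul_pow ha (by simpa using hs)).tsum_eq_zero_add]
    simp
  simpa using (htail.const_add (a 0)).congr_of_eventuallyEq heq

theorem le_tsum_mul_pow (ha : ∀ k, |a k| ≤ C * (k + 1) ^ m) (ha₀ : ∀ k, 0 ≤ a k) {t : ℝ}
    (ht₀ : 0 ≤ t) (ht : t < 1) : a 0 ≤ ∑' k, a k * t ^ k := by
  simpa using (summable_mul_pow ha (by rwa [abs_of_nonneg ht₀])).le_tsum 0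
    fun k _ => mul_nonneg (ha₀ k) (pow_nonneg ht₀ k)

end PowerSeries

section EvenExtension

variable {F F' : ℝ → ℝ} {x : ℝ}

theorem hasDerivAt_comp_abs (hF : HasDerivAt F (F' |x|) |x|) (h₀ : F' 0 = 0) :
    HasDerivAt (fun y => F |y|) (SignType.sign x * F' |x|) x := by
  rcases eq_or_ne x 0 with rfl | hx
  · simp only [abs_zero, h₀, mul_zero] at hF ⊢
    have hright : HasDerivWithinAt (fun y => F |y|) 0 (Ici 0) 0 :=
      hF.hasDerivWithinAt.congr (fun y hy => by rw [abs_of_nonneg hy]) (by simp)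
    have hleft : HasDerivWithinAt (fun y => F |y|) 0 (Iic 0) 0 := by
      have := ((neg_zero (G := ℝ)).symm ▸ hF).comp 0 (hasDerivAt_neg 0)
      simp only [mul_neg_one, neg_zero] at this
      exact this.hasDerivWithinAt.congr
        (fun y hy => by simp [abs_of_nonpos (mem_Iic.mp hy)]) (by simp)
    simpa [Iic_union_Ici] using hleft.union hright
  · exact (hF.comp x (hasDerivAt_abs hx)).congr_deriv (mul_comm _ _)

theorem hasDerivAt_sign_mul_comp_abs (hF : HasDerivAt F (F' |x|) |x|) (h₀ : F 0 = 0) :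
    HasDerivAt (fun y => SignType.sign y * F |y|) (F' |x|) x := by
  rcases eq_or_ne x 0 with rfl | hx
  · simp only [abs_zero] at hF ⊢
    have hright : HasDerivWithinAt (fun y => SignType.sign y * F |y|) (F' 0) (Ici 0) 0 :=
      hF.hasDerivWithinAt.congr (fun y hy => by
        rcases (mem_Ici.mp hy).eq_or_lt with rfl | hy
        · simp [h₀]
        · simp [hy, abs_of_pos hy]) (by simp [h₀])
    have hleft : HasDerivWithinAt (fun y => SignType.sign y * F |y|) (F' 0) (Iic 0) 0 := by
      have := (((neg_zero (G := ℝ)).symm ▸ hF).comp 0 (hasDerivAt_neg 0)).neg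
      simp only [mul_neg_one, neg_neg, neg_zero] at this
      exact this.hasDerivWithinAt.congr (fun y hy => by
        rcases (mem_Iic.mp hy).eq_or_lt with rfl | hy
        · simp [h₀]
        · simp [hy, abs_of_neg hy]) (by simp [h₀])
    simpa [Iic_union_Ici] using hleft.union hright
  · have hsign : ∀ᶠ y in 𝓝 x, SignType.sign y = SignType.sign x :=
      continuousAt_sign_of_ne_zero hx ((isOpen_discrete {SignType.sign x}).mem_nhds rfl)
    have := (hF.comp x (hasDerivAt_abs hx)).const_mul (SignType.sign x : ℝ)
    refine (this.congr_of_eventuallyEq (hsign.mono fun y hy => by simp [hy])).congr_deriv ?_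
    rcases hx.lt_or_gt with hx | hx <;> simp [hx]

end EvenExtension

/-- Taylor coefficients at `t = 0` of `₂F₁(a, b; 1; t)` with `a + b = ab = 1`, i.e. of the
Legendre function `P_ν(1 - 2t)` with `ν(ν + 1) = -1`: the solution of `L z = 0` regular at
`x = 1`. -/
noncomputable def hypergeomCoeff : ℕ → ℝ
  | 0 => 1
  | k + 1 => ((k : ℝ) ^ 2 + k + 1) / (k + 1) ^ 2 * hypergeomCoeff k

theorem hypergeomCoeff_succ_mul (k : ℕ) :
    ((k : ℝ) + 1) ^ 2 * hypergeomCoeff (k + 1) = ((k : ℝ) ^ 2 + k + 1) * hypergeomCoeff k := by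
  rw [hypergeomCoeff]
  field_simp

theorem hypergeomCoeff_pos (k : ℕ) : 0 < hypergeomCoeff k := by
  induction k with
  | zero => simp [hypergeomCoeff]
  | succ k ih => rw [hypergeomCoeff]; positivity

theorem hypergeomCoeff_le_one (k : ℕ) : hypergeomCoeff k ≤ 1 := by
  induction k with
  | zero => simp [hypergeomCoeff]
  | succ k ih =>
    rw [hypergeomCoeff]
    have hratio : ((k : ℝ) ^ 2 + k + 1) / (k + 1) ^ 2 ≤ 1 := by
      rw [div_le_one (by positivity)]
      nlinarith [k.cast_nonneg (α := ℝ)]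
    exact mul_le_one₀ hratio (hypergeomCoeff_pos k).le ih

theorem abs_hypergeomCoeff_le (k : ℕ) : |hypergeomCoeff k| ≤ 1 * ((k : ℝ) + 1) ^ 0 := by
  simpa [abs_of_pos (hypergeomCoeff_pos k)] using hypergeomCoeff_le_one k

theorem hypergeomCoeff_ode (k : ℕ) :
    shiftCoeff (derivCoeff (derivCoeff hypergeomCoeff)) k
      - shiftCoeff (shiftCoeff (derivCoeff (derivCoeff hypergeomCoeff))) k
      + derivCoeff hypergeomCoeff k - 2 * shiftCoeff (derivCoeff hypergeomCoeff) k
      - hypergeomCoeff k = 0 := by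
  rcases k with _ | _ | k
  all_goals simp only [shiftCoeff, derivCoeff]; push_cast
  · linear_combination hypergeomCoeff_succ_mul 0
  · linear_combination hypergeomCoeff_succ_mul 1
  · have h := hypergeomCoeff_succ_mul (k + 2)
    push_cast at h
    linear_combination h

noncomputable def hypergeom (t : ℝ) : ℝ := ∑' k, hypergeomCoeff k * t ^ k

noncomputable def hypergeomDeriv (t : ℝ) : ℝ := ∑' k, derivCoeff hypergeomCoeff k * t ^ k

noncomputable def hypergeomDeriv2 (t : ℝ) : ℝ :=
  ∑' k, derivCoeff (derivCoeff hypergeomCoeff) k * t ^ k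

section Hypergeom

variable {t : ℝ}

theorem hasDerivAt_hypergeom (ht : |t| < 1) : HasDerivAt hypergeom (hypergeomDeriv t) t :=
  hasDerivAt_tsum_mul_pow abs_hypergeomCoeff_le ht

theorem hasDerivAt_hypergeomDeriv (ht : |t| < 1) :
    HasDerivAt hypergeomDeriv (hypergeomDeriv2 t) t :=
  hasDerivAt_tsum_mul_pow (abs_derivCoeff_le abs_hypergeomCoeff_le) ht

theorem continuousAt_hypergeomDeriv2 (ht : |t| < 1) : ContinuousAt hypergeomDeriv2 t :=
  (hasDerivAt_tsum_mul_pow (abs_derivCoeff_le (abs_derivCoeff_le abs_hypergeomCoeff_le))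
    ht).continuousAt

theorem hypergeom_ode (ht : |t| < 1) :
    t * (1 - t) * hypergeomDeriv2 t + (1 - 2 * t) * hypergeomDeriv t - hypergeom t = 0 := by
  have h₀ := (summable_mul_pow abs_hypergeomCoeff_le ht).hasSum
  have h₁ := (summable_mul_pow (abs_derivCoeff_le abs_hypergeomCoeff_le) ht).hasSum
  have h₂ := (summable_mul_pow
    (abs_derivCoeff_le (abs_derivCoeff_le abs_hypergeomCoeff_le)) ht).hasSum
  have hsum :=
    (((h₂.shiftCoeff_mul_pow.sub h₂.shiftCoeff_mul_pow.shiftCoeff_mul_pow).add h₁).sub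
      (h₁.shiftCoeff_mul_pow.mul_left 2)).sub h₀
  have hterms : (fun k => shiftCoeff (derivCoeff (derivCoeff hypergeomCoeff)) k * t ^ k
      - shiftCoeff (shiftCoeff (derivCoeff (derivCoeff hypergeomCoeff))) k * t ^ k
      + derivCoeff hypergeomCoeff k * t ^ k
      - 2 * (shiftCoeff (derivCoeff hypergeomCoeff) k * t ^ k)
      - hypergeomCoeff k * t ^ k) = fun _ => 0 := by
    ext k
    linear_combination t ^ k * hypergeomCoeff_ode k
  rw [hterms] at hsum
  unfold hypergeom hypergeomDeriv hypergeomDeriv2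
  linear_combination hsum.unique hasSum_zero

theorem one_le_hypergeom (ht₀ : 0 ≤ t) (ht : t < 1) : 1 ≤ hypergeom t :=
  le_tsum_mul_pow abs_hypergeomCoeff_le (fun k => (hypergeomCoeff_pos k).le) ht₀ ht

theorem hypergeomDeriv_pos (ht₀ : 0 ≤ t) (ht : t < 1) : 0 < hypergeomDeriv t := by
  have hcoeff (k : ℕ) : 0 < derivCoeff hypergeomCoeff k := by
    have := hypergeomCoeff_pos (k + 1)
    rw [derivCoeff]
    positivity
  exact (hcoeff 0).trans_le (le_tsum_mul_pow (abs_derivCoeff_le abs_hypergeomCoeff_le)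
    (fun k => (hcoeff k).le) ht₀ ht)

end Hypergeom

noncomputable def matchingConst : ℝ := 2 / hypergeomDeriv (1 / 2)

noncomputable def halfProfile (u : ℝ) : ℝ := u + matchingConst * hypergeom ((1 - u) / 2)

noncomputable def halfProfileDeriv (u : ℝ) : ℝ :=
  1 - matchingConst / 2 * hypergeomDeriv ((1 - u) / 2)

noncomputable def halfProfileDeriv2 (u : ℝ) : ℝ :=
  matchingConst / 4 * hypergeomDeriv2 ((1 - u) / 2)

section HalfProfile

variable {u : ℝ}

theorem abs_one_sub_div_two_lt_one (hu : u ∈ Ioo (-1 : ℝ) 3) : |(1 - u) / 2| < 1 := by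
  rw [abs_lt]; constructor <;> linarith [hu.1, hu.2]

theorem hasDerivAt_one_sub_div_two : HasDerivAt (fun v : ℝ => (1 - v) / 2) (-(1 / 2)) u := by
  simpa [neg_div] using ((hasDerivAt_id u).const_sub 1).div_const 2

theorem hasDerivAt_halfProfile (hu : u ∈ Ioo (-1 : ℝ) 3) :
    HasDerivAt halfProfile (halfProfileDeriv u) u := by
  have := ((hasDerivAt_hypergeom (abs_one_sub_div_two_lt_one hu)).comp u
    hasDerivAt_one_sub_div_two).const_mul matchingConst
  exact ((hasDerivAt_id u).add this).congr_deriv (by simp [halfProfileDeriv]; ring)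

theorem hasDerivAt_halfProfileDeriv (hu : u ∈ Ioo (-1 : ℝ) 3) :
    HasDerivAt halfProfileDeriv (halfProfileDeriv2 u) u := by
  have := ((hasDerivAt_hypergeomDeriv (abs_one_sub_div_two_lt_one hu)).comp u
    hasDerivAt_one_sub_div_two).const_mul (matchingConst / 2)
  exact (this.const_sub 1).congr_deriv (by simp [halfProfileDeriv2]; ring)

theorem continuousAt_halfProfileDeriv2 (hu : u ∈ Ioo (-1 : ℝ) 3) :
    ContinuousAt halfProfileDeriv2 u :=
  ((continuousAt_hypergeomDeriv2 (abs_one_sub_div_two_lt_one hu)).comp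
    (f := fun v => (1 - v) / 2) hasDerivAt_one_sub_div_two.continuousAt).const_mul _

theorem halfProfileDeriv_zero : halfProfileDeriv 0 = 0 := by
  have h := (hypergeomDeriv_pos (t := 1 / 2) (by norm_num) (by norm_num)).ne'
  rw [halfProfileDeriv, matchingConst]
  norm_num
  field_simp
  ring

theorem Lop_halfProfile (hu : u ∈ Ioo (-1 : ℝ) 3) :
    Lop halfProfile halfProfileDeriv halfProfileDeriv2 u = 3 * u := by
  have := hypergeom_ode (abs_one_sub_div_two_lt_one hu)
  unfold Lop halfProfile halfProfileDeriv halfProfileDeriv2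
  linear_combination (-matchingConst) * this

theorem halfProfile_pos (hu₀ : 0 ≤ u) (hu₁ : u ≤ 1) : 0 < halfProfile u := by
  have hconst : 0 < matchingConst :=
    div_pos two_pos (hypergeomDeriv_pos (by norm_num) (by norm_num))
  have := one_le_hypergeom (t := (1 - u) / 2) (by linarith) (by linarith)
  rw [halfProfile]
  nlinarith

end HalfProfile

theorem Lop_comp_abs (F F' F'' : ℝ → ℝ) (x : ℝ) :
    Lop (fun y => F |y|) (fun y => SignType.sign y * F' |y|) (fun y => F'' |y|) x
      = Lop F F' F'' |x| := by
  unfold Lop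
  rw [sq_abs]
  linear_combination 2 * F' |x| * self_mul_sign x

theorem Lop_sub (Z Z' Z'' Y Y' Y'' : ℝ → ℝ) (x : ℝ) :
    Lop (Z - Y) (Z' - Y') (Z'' - Y'') x = Lop Z Z' Z'' x - Lop Y Y' Y'' x := by
  simp only [Lop, Pi.sub_apply]
  ring

theorem abs_mem_Ioo_of_mem_Icc {x : ℝ} (hx : x ∈ Icc (-1 : ℝ) 1) : |x| ∈ Ioo (-1 : ℝ) 3 :=
  ⟨(neg_one_lt_zero).trans_le (abs_nonneg x), (abs_le.mpr hx).trans_lt (by norm_num)⟩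

theorem isC2On_halfProfile_comp_abs :
    IsC2On (fun x => halfProfile |x|) (fun x => SignType.sign x * halfProfileDeriv |x|)
      (fun x => halfProfileDeriv2 |x|) := by
  refine ⟨fun x hx => ?_, fun x hx => ?_, fun x hx => ?_⟩
  · exact (hasDerivAt_comp_abs (hasDerivAt_halfProfile (abs_mem_Ioo_of_mem_Icc hx))
      halfProfileDeriv_zero).hasDerivWithinAt
  · exact (hasDerivAt_sign_mul_comp_abs (hasDerivAt_halfProfileDeriv
      (abs_mem_Ioo_of_mem_Icc hx)) halfProfileDeriv_zero).hasDerivWithinAt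
  · exact ((continuousAt_halfProfileDeriv2 (abs_mem_Ioo_of_mem_Icc hx)).comp
      continuous_abs.continuousAt).continuousWithinAt

theorem Lop_halfProfile_comp_abs {x : ℝ} (hx : x ∈ Icc (-1 : ℝ) 1) :
    Lop (fun x => halfProfile |x|) (fun x => SignType.sign x * halfProfileDeriv |x|)
      (fun x => halfProfileDeriv2 |x|) x = 3 * |x| := by
  rw [Lop_comp_abs, Lop_halfProfile (abs_mem_Ioo_of_mem_Icc hx)]

theorem eq_zero_of_Lop_eq_zero {W W' W'' : ℝ → ℝ}
    (hW : ∀ x ∈ Icc (-1 : ℝ) 1, HasDerivWithinAt W (W' x) (Icc (-1 : ℝ) 1) x)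
    (hW' : ∀ x ∈ Icc (-1 : ℝ) 1, HasDerivWithinAt W' (W'' x) (Icc (-1 : ℝ) 1) x)
    (hL : ∀ x ∈ Icc (-1 : ℝ) 1, Lop W W' W'' x = 0) {x : ℝ} (hx : x ∈ Icc (-1 : ℝ) 1) :
    W x = 0 := by
  set P : ℝ → ℝ := fun y => (1 - y ^ 2) * (W' y * W y)
  have hP : ∀ y ∈ Icc (-1 : ℝ) 1,
      HasDerivWithinAt P (W y ^ 2 + (1 - y ^ 2) * W' y ^ 2) (Icc (-1 : ℝ) 1) y := by
    intro y hy
    have hpoly : HasDerivAt (fun y : ℝ => 1 - y ^ 2) (-(2 * y)) y := by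
      simpa using (hasDerivAt_pow 2 y).const_sub 1
    refine (hpoly.hasDerivWithinAt.mul ((hW' y hy).mul (hW y hy))).congr_deriv ?_
    have := hL y hy
    unfold Lop at this
    simp only [Pi.mul_apply]
    linear_combination (-W y) * this
  have hmono : MonotoneOn P (Icc (-1 : ℝ) 1) := by
    refine monotoneOn_of_hasDerivWithinAt_nonneg (convex_Icc _ _)
      (fun y hy => (hP y hy).continuousWithinAt)
      (fun y hy => (hP y (interior_subset hy)).mono interior_subset) fun y hy => ?_
    rw [interior_Icc] at hy
    have : 0 ≤ 1 - y ^ 2 := by nlinarith [hy.1, hy.2]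
    positivity
  have hP_zero : ∀ y ∈ Icc (-1 : ℝ) 1, P y = 0 := fun y hy => le_antisymm
    (by simpa [P] using hmono hy (right_mem_Icc.mpr (by norm_num)) hy.2)
    (by simpa [P] using hmono (left_mem_Icc.mpr (by norm_num)) hy hy.1)
  have hq : W x ^ 2 + (1 - x ^ 2) * W' x ^ 2 = 0 :=
    (uniqueDiffOn_Icc (by norm_num) x hx).eq_deriv _ (hP x hx)
      ((hasDerivWithinAt_const x _ 0).congr hP_zero (hP_zero x hx))
  have : 0 ≤ 1 - x ^ 2 := by nlinarith [hx.1, hx.2]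
  nlinarith [sq_nonneg (W x), mul_nonneg this (sq_nonneg (W' x))]

/-- There is a unique `C²` solution `Y` of `L[Y](x) = 3|x|` on `[-1,1]`;
moreover it is even and strictly positive. -/
theorem exists_unique_Y1 :
    ∃ Y Y' Y'' : ℝ → ℝ, IsC2On Y Y' Y'' ∧
      (∀ x ∈ Icc (-1 : ℝ) 1, Lop Y Y' Y'' x = 3 * |x|) ∧
      (∀ x ∈ Icc (-1 : ℝ) 1, Y (-x) = Y x) ∧
      (∀ x ∈ Icc (-1 : ℝ) 1, 0 < Y x) ∧
      (∀ Z Z' Z'' : ℝ → ℝ, IsC2On Z Z' Z'' →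
        (∀ x ∈ Icc (-1 : ℝ) 1, Lop Z Z' Z'' x = 3 * |x|) →
        ∀ x ∈ Icc (-1 : ℝ) 1, Z x = Y x) := by
  obtain ⟨hY, hY', -⟩ := isC2On_halfProfile_comp_abs
  refine ⟨_, _, _, isC2On_halfProfile_comp_abs, fun x hx => Lop_halfProfile_comp_abs hx,
    fun x _ => by rw [abs_neg], fun x hx => halfProfile_pos (abs_nonneg x) (abs_le.mpr hx), ?_⟩
  rintro Z Z' Z'' ⟨hZ, hZ', -⟩ hLZ x hx
  have := eq_zero_of_Lop_eq_zero (W' := Z' - _) (W'' := Z'' - _)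
    (fun y hy => (hZ y hy).sub (hY y hy))
    (fun y hy => (hZ' y hy).sub (hY' y hy))
    (fun y hy => by rw [Lop_sub, hLZ y hy, Lop_halfProfile_comp_abs hy, sub_self]) hx
  exact sub_eq_zero.mp this
end

section
/- For all real numbers A and B, the inequality (1/(cosh α (cosh α - c sinh α)) - 1)·A + B ≥ 0 holds for every α ∈ ℝ and every c ∈ [-1,1] if and only if B ≥ 0 and -B ≤ A ≤ B. Moreover, the function f(α,c) := cosh α (cosh α - c sinh α) = (1/2)(1 + cosh 2α - c sinh 2α) on ℝ × [-1,1] takes exactly the values in the open interval (1/2, +∞). -/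
open Set Real

lemma fval (α : ℝ) : Real.cosh α * (Real.cosh α - 1 * Real.sinh α)
    = (1 + Real.exp (-(2*α))) / 2 := by
  rw [one_mul, Real.cosh_sub_sinh, Real.cosh_eq]
  have h : Real.exp (-α) * Real.exp (-α) = Real.exp (-(2*α)) := by
    rw [← Real.exp_add]; ring_nf
  have h2 : Real.exp α * Real.exp (-α) = 1 := by
    rw [← Real.exp_add]; simp
  nlinarith [h, h2]

lemma fpos (α c : ℝ) (hc : c ∈ Icc (-1:ℝ) 1) :
    1/2 < Real.cosh α * (Real.cosh α - c * Real.sinh α) := by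
  have h1 : c * Real.sinh α ≤ |Real.sinh α| := by
    calc c * Real.sinh α ≤ |c * Real.sinh α| := le_abs_self _
    _ = |c| * |Real.sinh α| := abs_mul _ _
    _ ≤ 1 * |Real.sinh α| :=
        mul_le_mul_of_nonneg_right (abs_le.mpr ⟨hc.1, hc.2⟩) (abs_nonneg _)
    _ = |Real.sinh α| := one_mul _
  have h2 : |Real.sinh α| < Real.cosh α := by
    rw [abs_lt]
    constructor
    · nlinarith [Real.exp_pos α, Real.cosh_add_sinh α]
    · nlinarith [Real.exp_pos (-α), Real.cosh_sub_sinh α]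
  have h3 := Real.cosh_sq α
  have h4 := sq_abs (Real.sinh α)
  have h5 : 0 < (Real.cosh α - |Real.sinh α|) * (Real.cosh α - |Real.sinh α|) :=
    mul_pos (by linarith) (by linarith)
  nlinarith [Real.cosh_pos α]

lemma exists_alpha (t : ℝ) (ht : t ∈ Ioo (-1:ℝ) 1) :
    ∃ α : ℝ, 1 / (Real.cosh α * (Real.cosh α - 1 * Real.sinh α)) - 1 = t := by
  obtain ⟨ht1, ht2⟩ := ht
  have hu : 0 < (1 - t) / (1 + t) := div_pos (by linarith) (by linarith)
  refine ⟨-(Real.log ((1 - t) / (1 + t))) / 2, ?_⟩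
  rw [fval]
  have he : Real.exp (-(2 * (-(Real.log ((1 - t) / (1 + t))) / 2)))
      = (1 - t) / (1 + t) := by
    rw [show -(2 * (-(Real.log ((1 - t) / (1 + t))) / 2)) = Real.log ((1-t)/(1+t)) by ring,
      Real.exp_log hu]
  rw [he]
  have h1 : (1:ℝ) + t ≠ 0 := by linarith
  field_simp
  ring

/-- The FLRW stability inequality: for all reals `A`, `B`, the inequality
`(1/(cosh α (cosh α - c sinh α)) - 1) A + B ≥ 0` holds for every `α ∈ ℝ`
and `c ∈ [-1,1]` iff `B ≥ 0` and `-B ≤ A ≤ B`; moreover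
`f(α,c) = cosh α (cosh α - c sinh α) = (1/2)(1 + cosh 2α - c sinh 2α)`
takes exactly the values in `(1/2, ∞)` on `ℝ × [-1,1]`. -/
theorem flrw_stability_inequality :
    (∀ A B : ℝ,
      (∀ α : ℝ, ∀ c ∈ Icc (-1 : ℝ) 1,
        0 ≤ (1 / (Real.cosh α * (Real.cosh α - c * Real.sinh α)) - 1) * A + B)
      ↔ (0 ≤ B ∧ -B ≤ A ∧ A ≤ B)) ∧
    (∀ α : ℝ, ∀ c : ℝ,
      Real.cosh α * (Real.cosh α - c * Real.sinh α)
        = (1 / 2) * (1 + Real.cosh (2 * α) - c * Real.sinh (2 * α))) ∧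
    ((fun p : ℝ × ℝ => Real.cosh p.1 * (Real.cosh p.1 - p.2 * Real.sinh p.1)) ''
      (univ ×ˢ Icc (-1 : ℝ) 1) = Ioi (1 / 2)) := by
  refine ⟨?_, ?_, ?_⟩
  · intro A B
    constructor
    · intro h
      have key : ∀ t ∈ Ioo (-1:ℝ) 1, 0 ≤ t * A + B := by
        intro t ht
        obtain ⟨α, hα⟩ := exists_alpha t ht
        have := h α 1 ⟨by norm_num, le_refl 1⟩
        rwa [hα] at this
      have hB : 0 ≤ B := by
        have := key 0 ⟨by norm_num, by norm_num⟩
        linarith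
      have hAB : A ≤ B := by
        by_contra h'
        push_neg at h'
        have hA : 0 < A := lt_of_le_of_lt hB h'
        have ht : (-(A + B) / (2 * A)) ∈ Ioo (-1:ℝ) 1 := by
          constructor
          · rw [lt_div_iff₀ (by linarith : (0:ℝ) < 2 * A)]
            linarith
          · rw [div_lt_iff₀ (by linarith : (0:ℝ) < 2 * A)]
            linarith
        have := key _ ht
        rw [div_mul_eq_mul_div, mul_comm] at this
        have h2 : A * (-(A + B)) / (2 * A) = -(A + B) / 2 := by
          field_simp
        rw [h2] at this
        linarith
      have hBA : -B ≤ A := by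
        by_contra h'
        push_neg at h'
        have hA : A < 0 := by linarith
        have ht : ((B - A) / (2 * (-A))) ∈ Ioo (-1:ℝ) 1 := by
          constructor
          · rw [lt_div_iff₀ (by linarith : (0:ℝ) < 2 * (-A))]
            linarith
          · rw [div_lt_iff₀ (by linarith : (0:ℝ) < 2 * (-A))]
            linarith
        have := key _ ht
        rw [div_mul_eq_mul_div, mul_comm] at this
        have h2 : A * (B - A) / (2 * (-A)) = -(B - A) / 2 := by
          rw [div_eq_div_iff (by linarith) (by norm_num)]
          ring
        rw [h2] at this
        linarith
      exact ⟨hB, hBA, hAB⟩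
    · rintro ⟨hB, h1, h2⟩ α c hc
      have hf := fpos α c hc
      set f := Real.cosh α * (Real.cosh α - c * Real.sinh α) with hfdef
      have hf0 : 0 < f := by linarith
      have ht2 : 1 / f - 1 < 1 := by
        have : 1 / f < 2 := by
          rw [div_lt_iff₀ hf0]; linarith
        linarith
      have ht1 : -1 < 1 / f - 1 := by
        have : 0 < 1 / f := by positivity
        linarith
      nlinarith [mul_nonneg (by linarith : (0:ℝ) ≤ 1/f - 1 + 1) (by linarith : (0:ℝ) ≤ A + B),
        mul_nonneg (by linarith : (0:ℝ) ≤ 1 - (1/f - 1)) (by linarith : (0:ℝ) ≤ B - A)]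
  · intro α c
    rw [Real.cosh_two_mul, Real.sinh_two_mul]
    linear_combination (Real.cosh_sq α) / 2
  · ext y
    simp only [mem_image, mem_prod, mem_univ, true_and, mem_Ioi, Prod.exists]
    constructor
    · rintro ⟨α, c, hc, rfl⟩
      exact fpos α c hc
    · intro hy
      refine ⟨-(Real.log (2 * y - 1)) / 2, 1, ⟨by norm_num, le_refl 1⟩, ?_⟩
      have := fval (-(Real.log (2 * y - 1)) / 2)
      rw [one_mul] at this ⊢
      rw [this]
      rw [show -(2 * (-(Real.log (2 * y - 1)) / 2)) = Real.log (2 * y - 1) by ring,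
        Real.exp_log (by linarith)]
      ring
end
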